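/- There is an absolute constant c > 0 (one may take c = 1/8000) such that the following holds. Let B₁, B₂ ⊆ B_{ℂ²}(0,1) be balls of radius 0.01 whose centers are at distance 1.2 from each other. Let p⃗₁ = (x₁,y₁), p⃗₃ = (x₃,y₃) with p⃗₁ ∈ B₁, p⃗₃ ∈ B₂, and p⃗₂ = (x₂,y₂), p⃗₄ = (x₄,y₄) with p⃗₂ ∈ B₂, p⃗₄ ∈ B₁. Define v := ((y₁−y₃)/2, −(x₁−x₃)/2, 1) and w := ((y₂−y₄)/2, −(x₂−x₄)/2, 1) in ℂ³. Then |⟨v, w⟩| ≤ (1 − c)·‖v‖·‖w‖; equivalently, the angle arccos(|⟨v,w⟩|/(‖v‖‖w‖)) between the auxiliary lines l_{p⃗₁,p⃗₃} and l_{p⃗₂,p⃗₄} is bounded below by an absolute positive constant. -/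

import Mathlib

/-!
Since `⟨auxDir p₁ p₃, auxDir p₂ p₄⟩ = ⟨p₁ - p₃, p₂ - p₄⟩ / 4 + 1` and
`‖auxDir p q‖² = ‖p - q‖² / 4 + 1`, everything is governed by the two chords `p₁ - p₃` and
`p₂ - p₄`. Both lie within `0.02` of `±d`, where `d = b₁ - b₂` has `‖d‖ = 1.2`, but with
opposite signs; hence the inner product is within `0.013` of `1 - ‖d‖² / 4 = 0.64`, while each
direction vector has norm at least `√(1 + 1.18² / 4) > 1.16`, and `0.653 < 1.16²·(1 - 1/8000)`.
-/

open Metric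
open scoped Classical

noncomputable section

/-- `ℂⁿ` with its Euclidean (Hermitian) metric. -/
abbrev Cspace (n : ℕ) := EuclideanSpace ℂ (Fin n)

/-- The point of `ℂ³` with coordinates `(a, b, c)`. -/
def pt3 (a b c : ℂ) : Cspace 3 :=
  WithLp.toLp 2 (fun i : Fin 3 => if i = 0 then a else if i = 1 then b else c)

/-- The auxiliary complex line `l_{p₁,p₂} ⊆ ℂ³` associated to `p₁, p₂ ∈ ℂ²`. -/
def auxLine (p₁ p₂ : Cspace 2) : Set (Cspace 3) :=
  {w | ∃ z : ℂ, w = pt3 ((p₁ 0 + p₂ 0) / 2 + z * (p₁ 1 - p₂ 1) / 2)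
      ((p₁ 1 + p₂ 1) / 2 - z * (p₁ 0 - p₂ 0) / 2) z}

/-- The tube `T_{q₁,q₂} ⊆ ℂ³` associated to the `δ`-balls `q₁, q₂ ⊆ ℂ²` with centres
`c₁, c₂`: the union of the auxiliary lines over pairs of points of the balls, intersected
with `B_{ℂ³}(0,1)`. -/
def TT (δ : ℝ) (c₁ c₂ : Cspace 2) : Set (Cspace 3) :=
  (⋃ p₁ ∈ closedBall c₁ δ, ⋃ p₂ ∈ closedBall c₂ δ, auxLine p₁ p₂) ∩
    closedBall (0 : Cspace 3) 1

/-- The open line segment `{z • u + t : z ∈ ℂ, |z| < l/2}` in `ℂ³`. -/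
def segC3 (u t : Cspace 3) (l : ℝ) : Set (Cspace 3) :=
  {x | ∃ z : ℂ, ‖z‖ < l / 2 ∧ x = z • u + t}

/-- The complex tube of length `l` and radius `r` in `ℂ³`: the closed `r`-neighbourhood of
the segment `{z • u + t : |z| < l/2}` in the Euclidean metric of `ℂ³ ≅ ℝ⁶`. -/
def tubeC3 (u t : Cspace 3) (l r : ℝ) : Set (Cspace 3) :=
  cthickening r (segC3 u t l)

/-- The direction vector `((y₁ - y₂)/2, -(x₁ - x₂)/2, 1) ∈ ℂ³` of the auxiliary line
`l_{p₁,p₂}`. -/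
def auxDir (p₁ p₂ : Cspace 2) : Cspace 3 :=
  pt3 ((p₁ 1 - p₂ 1) / 2) (-(p₁ 0 - p₂ 0) / 2) 1

theorem norm_inner_add_norm_sq_le {𝕜 E : Type*} [RCLike 𝕜] [SeminormedAddCommGroup E]
    [InnerProductSpace 𝕜 E] {u w d : E} {ε : ℝ} (hu : ‖u - d‖ ≤ ε) (hw : ‖w + d‖ ≤ ε) :
    ‖(inner 𝕜 u w : 𝕜) + (‖d‖ : 𝕜) ^ 2‖ ≤ 2 * ε * ‖d‖ + ε ^ 2 := by
  have hε : 0 ≤ ε := (norm_nonneg _).trans hu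
  have hexpand : (inner 𝕜 u w : 𝕜) + (‖d‖ : 𝕜) ^ 2
      = inner 𝕜 d (w + d) - inner 𝕜 (u - d) d + inner 𝕜 (u - d) (w + d) := by
    simp only [inner_add_right, inner_sub_left, inner_self_eq_norm_sq_to_K]
    ring
  calc ‖(inner 𝕜 u w : 𝕜) + (‖d‖ : 𝕜) ^ 2‖
      ≤ ‖(inner 𝕜 d (w + d) : 𝕜)‖ + ‖(inner 𝕜 (u - d) d : 𝕜)‖
          + ‖(inner 𝕜 (u - d) (w + d) : 𝕜)‖ := by
        rw [hexpand, sub_eq_add_neg, ← norm_neg (inner 𝕜 (u - d) d)]; exact norm_add₃_le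
    _ ≤ ‖d‖ * ‖w + d‖ + ‖u - d‖ * ‖d‖ + ‖u - d‖ * ‖w + d‖ := by
        gcongr <;> exact norm_inner_le_norm _ _
    _ ≤ ‖d‖ * ε + ε * ‖d‖ + ε * ε := by gcongr
    _ = 2 * ε * ‖d‖ + ε ^ 2 := by ring

theorem inner_auxDir (p₁ p₂ p₃ p₄ : Cspace 2) :
    (inner ℂ (auxDir p₁ p₃) (auxDir p₂ p₄) : ℂ) = inner ℂ (p₁ - p₃) (p₂ - p₄) / 4 + 1 := by
  simp [auxDir, pt3, PiLp.inner_apply, Fin.sum_univ_three, Fin.sum_univ_two, map_div₀, map_ofNat]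
  ring

theorem norm_auxDir_sq (p q : Cspace 2) : ‖auxDir p q‖ ^ 2 = ‖p - q‖ ^ 2 / 4 + 1 := by
  rw [EuclideanSpace.norm_eq, EuclideanSpace.norm_eq, Real.sq_sqrt (by positivity),
    Real.sq_sqrt (by positivity)]
  simp [auxDir, pt3, Fin.sum_univ_three, Fin.sum_univ_two, norm_sub_rev (q 0)]
  ring

theorem sqrt_le_norm_auxDir {p q : Cspace 2} {r : ℝ} (hr : 0 ≤ r) (h : r ≤ ‖p - q‖) :
    √(r ^ 2 / 4 + 1) ≤ ‖auxDir p q‖ := by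
  rw [← Real.sqrt_sq (norm_nonneg (auxDir p q)), norm_auxDir_sq]
  gcongr

theorem norm_inner_auxDir_le {p₁ p₂ p₃ p₄ d : Cspace 2} {ε : ℝ}
    (h₁₃ : ‖p₁ - p₃ - d‖ ≤ ε) (h₂₄ : ‖p₂ - p₄ + d‖ ≤ ε) :
    ‖(inner ℂ (auxDir p₁ p₃) (auxDir p₂ p₄) : ℂ)‖
      ≤ |1 - ‖d‖ ^ 2 / 4| + (2 * ε * ‖d‖ + ε ^ 2) / 4 := by
  have hsplit : (inner ℂ (auxDir p₁ p₃) (auxDir p₂ p₄) : ℂ)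
      = ((1 - ‖d‖ ^ 2 / 4 : ℝ) : ℂ) + (inner ℂ (p₁ - p₃) (p₂ - p₄) + (‖d‖ : ℂ) ^ 2) / 4 := by
    rw [inner_auxDir]; push_cast; ring
  rw [hsplit]
  refine (norm_add_le _ _).trans ?_
  rw [Complex.norm_real, Real.norm_eq_abs, norm_div, Complex.norm_ofNat]
  gcongr
  exact norm_inner_add_norm_sq_le h₁₃ h₂₄

/-- the angle between the auxiliary lines `l_{p₁,p₃}` and `l_{p₂,p₄}` is
bounded below by an absolute positive constant (one may take `c = 1/8000`). -/
theorem statement13 :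
    ∃ c : ℝ, 0 < c ∧
      ∀ b₁ b₂ : Cspace 2,
        closedBall b₁ 0.01 ⊆ closedBall (0 : Cspace 2) 1 →
        closedBall b₂ 0.01 ⊆ closedBall (0 : Cspace 2) 1 →
        dist b₁ b₂ = 1.2 →
      ∀ p₁ p₂ p₃ p₄ : Cspace 2,
        p₁ ∈ closedBall b₁ 0.01 → p₄ ∈ closedBall b₁ 0.01 →
        p₂ ∈ closedBall b₂ 0.01 → p₃ ∈ closedBall b₂ 0.01 →
        ‖(inner ℂ (auxDir p₁ p₃) (auxDir p₂ p₄) : ℂ)‖ ≤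
          (1 - c) * ‖auxDir p₁ p₃‖ * ‖auxDir p₂ p₄‖ := by
  refine ⟨1 / 8000, by norm_num, fun b₁ b₂ _ _ hb p₁ p₂ p₃ p₄ h₁ h₄ h₂ h₃ => ?_⟩
  rw [mem_closedBall] at h₁ h₂ h₃ h₄
  have hd : ‖b₁ - b₂‖ = 1.2 := by rwa [← dist_eq_norm]
  have h₁₃ : ‖p₁ - p₃ - (b₁ - b₂)‖ ≤ 0.02 := by
    rw [← dist_eq_norm]; linarith [dist_sub_sub_le p₁ p₃ b₁ b₂]
  have h₂₄ : ‖p₂ - p₄ + (b₁ - b₂)‖ ≤ 0.02 := by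
    rw [← sub_neg_eq_add, neg_sub, ← dist_eq_norm]; linarith [dist_sub_sub_le p₂ p₄ b₂ b₁]
  have hn₁₃ : 1.18 ≤ ‖p₁ - p₃‖ := by linarith [norm_le_insert (p₁ - p₃) (b₁ - b₂)]
  have hn₂₄ : 1.18 ≤ ‖p₂ - p₄‖ := by
    have := norm_le_insert (p₂ - p₄) (-(b₁ - b₂))
    rw [norm_neg, sub_neg_eq_add] at this
    linarith
  have hlen {p q : Cspace 2} (h : 1.18 ≤ ‖p - q‖) : 1.16 ≤ ‖auxDir p q‖ :=
    ((Real.le_sqrt (by norm_num) (by norm_num)).2 (by norm_num)).trans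
      (sqrt_le_norm_auxDir (by norm_num) h)
  calc ‖(inner ℂ (auxDir p₁ p₃) (auxDir p₂ p₄) : ℂ)‖
      ≤ |1 - 1.2 ^ 2 / 4| + (2 * 0.02 * 1.2 + 0.02 ^ 2) / 4 := by
        simpa only [hd] using norm_inner_auxDir_le h₁₃ h₂₄
    _ ≤ (1 - 1 / 8000) * 1.16 * 1.16 := by norm_num [abs_of_pos]
    _ ≤ (1 - 1 / 8000) * ‖auxDir p₁ p₃‖ * ‖auxDir p₂ p₄‖ := by
        gcongr
        exacts [hlen hn₁₃, hlen hn₂₄]
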